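/- Let p : ℝ^d → (0,∞) be C³, K : ℝ^d → ℝ^d be C³, u : ℝ^d → ℝ^d be C², and h : ℝ^d → ℝ be C². Suppose that for every x and every j ∈ {1,…,d} both of the following hold. (i) 0 = p ∑_i K_i ∂²p/∂x_i∂x_j + p ∑_i (∂p/∂x_i)(∂K_i/∂x_j) + p² ∂h/∂x_j + p² ∂/∂x_j(∑_i ∂K_i/∂x_i) − (∑_i (∂p/∂x_i)K_i)(∂p/∂x_j). (ii) 0 = p ∑_i u_i ∂²p/∂x_i∂x_j + (p/2) ∑_{i,k} K_i K_k ∂³p/∂x_j∂x_i∂x_k + p ∑_i (∂p/∂x_i)(∂u_i/∂x_j) + p ∑_{i,k} K_i (∂²p/∂x_i∂x_k)(∂K_k/∂x_j) − p² h ∂h/∂x_j + p (∑_i (∂p/∂x_i)K_i) ∂h/∂x_j + p² ∑_i K_i ∂²h/∂x_i∂x_j + p² ∑_i (∂h/∂x_i)(∂K_i/∂x_j) + p (∑_i (∂p/∂x_i)K_i) ∂/∂x_j(∑_i ∂K_i/∂x_i) + p² [ ∂/∂x_j(∑_i ∂u_i/∂x_i) − ∑_{i,k} (∂K_k/∂x_i)(∂²K_i/∂x_j∂x_k)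 ] − (∑_i (∂p/∂x_i)u_i)(∂p/∂x_j) − (1/2)(∑_{i,k} K_i (∂²p/∂x_i∂x_k) K_k)(∂p/∂x_j). Then for every x and every j: −∂/∂x_j [ (1/p) ∑_i ∂(p u_i)/∂x_i ] = ∂/∂x_j [ −(1/2)h² − (1/(2p)) ∑_{i,k} K_i K_k ∂²p/∂x_i∂x_k + (1/2)(∑_i K_i ∂(log p)/∂x_i)² − ∑_{i,k} K_i (∂K_k/∂x_i)(∂(log p)/∂x_k) − ∑_k K_k ∂/∂x_k(∑_i ∂K_i/∂x_i) − (1/2) ∑_{i,k} (∂K_k/∂x_i)(∂K_i/∂x_k) ]. -/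

import Mathlib

/-!
Put `ψ = Kᵀ∇ log p = (∇p)ᵀK / p`. Identity (i) is `p² ∂ⱼ(ψ + h + ∇ᵀK) = 0`. Contracting it
with `K` shows that the potential on the right of (39) equals `Ψ - ψ²/2`, where
`Ψ = -h²/2 + Kᵀ∇²pK/(2p) + Kᵀ∇h - tr((∇Kᵀ)²)/2`. Identity (ii) is
`p² ∂ⱼ((1/p)∇ᵀ(pu) + Ψ) + p² ψ ∂ⱼ(h + ∇ᵀK) = 0`, so (ii) minus `ψ` times (i) is `p²` times
the derivative of `(1/p)∇ᵀ(pu) + Ψ - ψ²/2`, which is (39).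
-/

/-- Partial derivative `∂f/∂x_i` of a scalar function on `ℝ^d`. -/
noncomputable def pd {d : ℕ} (i : Fin d) (f : (Fin d → ℝ) → ℝ) (x : Fin d → ℝ) : ℝ :=
  fderiv ℝ f x (Pi.single i 1)

section PartialDerivative

variable {d : ℕ} {f g : (Fin d → ℝ) → ℝ} {x : Fin d → ℝ} {i : Fin d}

lemma pd_const (c : ℝ) : pd i (fun _ => c) x = 0 := by simp [pd]

lemma pd_add (hf : DifferentiableAt ℝ f x) (hg : DifferentiableAt ℝ g x) :
    pd i (fun y => f y + g y) x = pd i f x + pd i g x := by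
  simp [pd, fderiv_fun_add hf hg]

lemma pd_sub (hf : DifferentiableAt ℝ f x) (hg : DifferentiableAt ℝ g x) :
    pd i (fun y => f y - g y) x = pd i f x - pd i g x := by
  simp [pd, fderiv_fun_sub hf hg]

lemma pd_mul (hf : DifferentiableAt ℝ f x) (hg : DifferentiableAt ℝ g x) :
    pd i (fun y => f y * g y) x = pd i f x * g x + f x * pd i g x := by
  simp [pd, fderiv_fun_mul hf hg]
  ring

lemma pd_sq (hf : DifferentiableAt ℝ f x) :
    pd i (fun y => f y ^ 2) x = 2 * f x * pd i f x := by
  simp [pd, fderiv_fun_pow 2 hf]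

lemma pd_inv (hf : DifferentiableAt ℝ f x) (hx : f x ≠ 0) :
    pd i (fun y => (f y)⁻¹) x = -pd i f x / f x ^ 2 := by
  have hinv : HasFDerivAt (fun y => (f y)⁻¹) (-(f x ^ 2)⁻¹ • fderiv ℝ f x) x :=
    (hasDerivAt_inv hx).comp_hasFDerivAt x hf.hasFDerivAt
  simp [pd, hinv.fderiv, div_eq_inv_mul]

lemma pd_div (hf : DifferentiableAt ℝ f x) (hg : DifferentiableAt ℝ g x) (hx : g x ≠ 0) :
    pd i (fun y => f y / g y) x = (pd i f x * g x - f x * pd i g x) / g x ^ 2 := by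
  simp only [div_eq_mul_inv]
  rw [pd_mul hf (hg.fun_inv hx), pd_inv hg hx]
  field_simp
  ring

lemma pd_log (hf : DifferentiableAt ℝ f x) (hx : f x ≠ 0) :
    pd i (fun y => Real.log (f y)) x = pd i f x / f x := by
  simp [pd, fderiv.log hf hx]
  ring

lemma pd_sum {ι : Type*} {s : Finset ι} {F : ι → (Fin d → ℝ) → ℝ}
    (hF : ∀ a ∈ s, DifferentiableAt ℝ (F a) x) :
    pd i (fun y => ∑ a ∈ s, F a y) x = ∑ a ∈ s, pd i (F a) x := by
  simp [pd, fderiv_fun_sum hF]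

end PartialDerivative

section Regularity

variable {d : ℕ} {f : (Fin d → ℝ) → ℝ}

lemma contDiff_pd {m n : WithTop ℕ∞} (hf : ContDiff ℝ n f) (hmn : m + 1 ≤ n) (i : Fin d) :
    ContDiff ℝ m (pd i f) :=
  (hf.fderiv_right hmn).clm_apply contDiff_const

lemma differentiable_pd {n : WithTop ℕ∞} (hf : ContDiff ℝ n f) (hn : 2 ≤ n) (i : Fin d) :
    Differentiable ℝ (pd i f) :=
  (contDiff_pd (m := 1) hf (by exact_mod_cast hn) i).differentiable one_ne_zero

lemma pd_comm {n : WithTop ℕ∞} (hf : ContDiff ℝ n f) (hn : 2 ≤ n) (i k : Fin d)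
    (x : Fin d → ℝ) : pd i (pd k f) x = pd k (pd i f) x := by
  have hd : DifferentiableAt ℝ (fderiv ℝ f) x :=
    ((hf.fderiv_right (by exact_mod_cast hn : (1 : WithTop ℕ∞) + 1 ≤ n)).differentiable
      one_ne_zero).differentiableAt
  have hsymm := hf.contDiffAt.isSymmSndFDerivAt (x := x)
    (by simpa [minSmoothness_of_isRCLikeNormedField] using hn)
  have hsnd : ∀ a b, pd a (pd b f) x
      = fderiv ℝ (fderiv ℝ f) x (Pi.single a 1) (Pi.single b 1) := by
    intro a b
    change fderiv ℝ (fun y => fderiv ℝ f y (Pi.single b 1)) x (Pi.single a 1) = _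
    rw [fderiv_clm_apply hd (differentiableAt_const _)]
    simp
  rw [hsnd, hsnd, hsymm]

end Regularity

section FeedbackParticleFilter

variable {d : ℕ} {p h : (Fin d → ℝ) → ℝ} {K u : (Fin d → ℝ) → Fin d → ℝ}

lemma sum_mul_pd_log (hp : Differentiable ℝ p) (hp0 : ∀ y, p y ≠ 0) :
    (fun y => ∑ i, K y i * pd i (fun z => Real.log (p z)) y)
      = fun y => (∑ i, pd i p y * K y i) / p y := by
  ext y
  simp only [pd_log (hp y) (hp0 y), Finset.sum_div]
  exact Finset.sum_congr rfl fun i _ => by ring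

lemma sq_mul_pd_sum_mul_div (hp : ContDiff ℝ 2 p) (hK : ContDiff ℝ 1 K)
    (x : Fin d → ℝ) (hx : p x ≠ 0) (j : Fin d) :
    p x ^ 2 * pd j (fun y => (∑ i, pd i p y * K y i) / p y) x
      = p x * ∑ i, K x i * pd i (pd j p) x + p x * ∑ i, pd i p x * pd j (fun y => K y i) x
        - (∑ i, pd i p x * K x i) * pd j p x := by
  have dp : Differentiable ℝ p := hp.differentiable two_ne_zero
  have dp1 := differentiable_pd hp le_rfl
  have dK : Differentiable ℝ K := hK.differentiable one_ne_zero
  simp (disch := first | assumption | fun_prop) only [pd_div, pd_sum, pd_mul,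
    pd_comm hp le_rfl j]
  rw [mul_div_cancel₀ _ (pow_ne_zero 2 hx)]
  simp only [Finset.mul_sum, Finset.sum_mul, ← Finset.sum_add_distrib, ← Finset.sum_sub_distrib]
  exact Finset.sum_congr rfl fun i _ => by ring

lemma sq_mul_pd_one_div_mul_sum_pd_mul (hp : ContDiff ℝ 2 p) (hu : ContDiff ℝ 2 u)
    (x : Fin d → ℝ) (hx : p x ≠ 0) (j : Fin d) :
    p x ^ 2 * pd j (fun y => 1 / p y * ∑ i, pd i (fun z => p z * u z i) y) x
      = p x * ∑ i, u x i * pd i (pd j p) x + p x * ∑ i, pd i p x * pd j (fun y => u y i) x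
        - (∑ i, pd i p x * u x i) * pd j p x
        + p x ^ 2 * pd j (fun y => ∑ i, pd i (fun z => u z i) y) x := by
  have dp : Differentiable ℝ p := hp.differentiable two_ne_zero
  have du : Differentiable ℝ u := hu.differentiable two_ne_zero
  have dp1 := differentiable_pd hp le_rfl
  have du1 := fun i => differentiable_pd (contDiff_pi.1 hu i) le_rfl
  simp (disch := first | assumption | fun_prop) only [pd_mul, pd_add, pd_sum, pd_div, pd_const,
    pd_comm hp le_rfl j]
  field_simp
  simp only [mul_add, Finset.mul_sum, ← Finset.sum_add_distrib, ← Finset.sum_sub_distrib]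
  exact Finset.sum_congr rfl fun i _ => by ring

lemma pd_sum_sum_mul_mul_pd_pd (hp : ContDiff ℝ 3 p) (hK : ContDiff ℝ 1 K)
    (x : Fin d → ℝ) (j : Fin d) :
    pd j (fun y => ∑ i, ∑ k, K y i * K y k * pd i (pd k p) y) x
      = ∑ i, ∑ k, K x i * K x k * pd j (pd i (pd k p)) x
        + 2 * ∑ i, ∑ k, K x i * pd i (pd k p) x * pd j (fun y => K y k) x := by
  have dK : Differentiable ℝ K := hK.differentiable one_ne_zero
  have dp2 := fun k => differentiable_pd (contDiff_pd (m := 2) hp le_rfl k) le_rfl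
  have hswap : ∑ i, ∑ k, pd j (fun y => K y i) x * K x k * pd i (pd k p) x
      = ∑ i, ∑ k, K x i * pd i (pd k p) x * pd j (fun y => K y k) x := by
    rw [Finset.sum_comm]
    exact Finset.sum_congr rfl fun i _ => Finset.sum_congr rfl fun k _ => by
      rw [pd_comm hp (by norm_num) k i]
      ring
  have hcomm : ∑ i, ∑ k, K x i * pd j (fun y => K y k) x * pd i (pd k p) x
      = ∑ i, ∑ k, K x i * pd i (pd k p) x * pd j (fun y => K y k) x :=
    Finset.sum_congr rfl fun i _ => Finset.sum_congr rfl fun k _ => mul_right_comm _ _ _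
  simp (disch := fun_prop) only [pd_sum, pd_mul]
  simp only [add_mul, Finset.sum_add_distrib, hswap, hcomm]
  ring

lemma pd_sum_mul_pd (hh : ContDiff ℝ 2 h) (hK : ContDiff ℝ 1 K) (x : Fin d → ℝ) (j : Fin d) :
    pd j (fun y => ∑ i, K y i * pd i h y) x
      = ∑ i, K x i * pd i (pd j h) x + ∑ i, pd i h x * pd j (fun y => K y i) x := by
  have dK : Differentiable ℝ K := hK.differentiable one_ne_zero
  have dh1 := differentiable_pd hh le_rfl
  simp (disch := fun_prop) only [pd_sum, pd_mul, pd_comm hh le_rfl j]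
  rw [← Finset.sum_add_distrib]
  exact Finset.sum_congr rfl fun i _ => by ring

lemma pd_sum_sum_pd_mul_pd (hK : ContDiff ℝ 2 K) (x : Fin d → ℝ) (j : Fin d) :
    pd j (fun y => ∑ i, ∑ k, pd i (fun z => K z k) y * pd k (fun z => K z i) y) x
      = 2 * ∑ i, ∑ k, pd i (fun y => K y k) x * pd j (pd k (fun y => K y i)) x := by
  have dK1 := fun k => differentiable_pd (contDiff_pi.1 hK k) le_rfl
  have hswap : ∑ i, ∑ k, pd j (pd i (fun y => K y k)) x * pd k (fun y => K y i) x
      = ∑ i, ∑ k, pd i (fun y => K y k) x * pd j (pd k (fun y => K y i)) x := by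
    rw [Finset.sum_comm]
    exact Finset.sum_congr rfl fun i _ => Finset.sum_congr rfl fun k _ => mul_comm _ _
  simp (disch := fun_prop) only [pd_sum, pd_mul]
  simp only [Finset.sum_add_distrib]
  rw [hswap]
  ring

lemma sum_mul_orderDz (y : Fin d → ℝ) :
    ∑ m, K y m * (p y * ∑ i, K y i * pd i (pd m p) y
        + p y * ∑ i, pd i p y * pd m (fun z => K z i) y
        + p y ^ 2 * pd m h y
        + p y ^ 2 * pd m (fun z => ∑ i, pd i (fun w => K w i) z) y
        - (∑ i, pd i p y * K y i) * pd m p y)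
      = p y * ∑ i, ∑ k, K y i * K y k * pd i (pd k p) y
        + p y * ∑ i, ∑ k, K y i * pd i (fun z => K z k) y * pd k p y
        + p y ^ 2 * ∑ i, K y i * pd i h y
        + p y ^ 2 * ∑ k, K y k * pd k (fun z => ∑ i, pd i (fun w => K w i) z) y
        - (∑ i, pd i p y * K y i) ^ 2 := by
  have hS : ∑ m, K y m * (p y * ∑ i, K y i * pd i (pd m p) y)
      = p y * ∑ i, ∑ k, K y i * K y k * pd i (pd k p) y := by
    simp only [Finset.mul_sum]
    exact Finset.sum_comm.trans
      (Finset.sum_congr rfl fun i _ => Finset.sum_congr rfl fun k _ => by ring)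
  have hA : ∑ m, K y m * (p y * ∑ i, pd i p y * pd m (fun z => K z i) y)
      = p y * ∑ i, ∑ k, K y i * pd i (fun z => K z k) y * pd k p y := by
    simp only [Finset.mul_sum]
    exact Finset.sum_congr rfl fun i _ => Finset.sum_congr rfl fun k _ => by ring
  have hN : ∑ m, K y m * ((∑ i, pd i p y * K y i) * pd m p y)
      = (∑ i, pd i p y * K y i) ^ 2 := by
    rw [sq, Finset.mul_sum]
    exact Finset.sum_congr rfl fun i _ => by ring
  simp only [mul_add, mul_sub, Finset.sum_add_distrib, Finset.sum_sub_distrib, hS, hA, hN]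
  simp only [Finset.mul_sum, mul_left_comm (K y _) (p y ^ 2)]

lemma potential_eq_of_orderDz (hp : Differentiable ℝ p) (hp0 : ∀ y, p y ≠ 0)
    (heqz : ∀ (y : Fin d → ℝ) (m : Fin d),
      0 = p y * ∑ i, K y i * pd i (pd m p) y
        + p y * ∑ i, pd i p y * pd m (fun z => K z i) y
        + p y ^ 2 * pd m h y
        + p y ^ 2 * pd m (fun z => ∑ i, pd i (fun w => K w i) z) y
        - (∑ i, pd i p y * K y i) * pd m p y) :
    (fun y =>
        - (1 / 2) * (h y) ^ 2
        - (1 / (2 * p y)) * ∑ i, ∑ k, K y i * K y k * pd i (pd k p) y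
        + (1 / 2) * (∑ i, K y i * pd i (fun z => Real.log (p z)) y) ^ 2
        - ∑ i, ∑ k, K y i * pd i (fun z => K z k) y * pd k (fun z => Real.log (p z)) y
        - ∑ k, K y k * pd k (fun z => ∑ i, pd i (fun w => K w i) z) y
        - (1 / 2) * ∑ i, ∑ k, pd i (fun z => K z k) y * pd k (fun z => K z i) y)
      = fun y =>
        - (1 / 2) * (h y) ^ 2
        + 1 / (2 * p y) * ∑ i, ∑ k, K y i * K y k * pd i (pd k p) y
        + ∑ i, K y i * pd i h y
        - (1 / 2) * ∑ i, ∑ k, pd i (fun z => K z k) y * pd k (fun z => K z i) y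
        - (1 / 2) * ((∑ i, pd i p y * K y i) / p y) ^ 2 := by
  ext y
  have hcontr : p y * ∑ i, ∑ k, K y i * K y k * pd i (pd k p) y
      + p y * ∑ i, ∑ k, K y i * pd i (fun z => K z k) y * pd k p y
      + p y ^ 2 * ∑ i, K y i * pd i h y
      + p y ^ 2 * ∑ k, K y k * pd k (fun z => ∑ i, pd i (fun w => K w i) z) y
      - (∑ i, pd i p y * K y i) ^ 2 = 0 := by
    rw [← sum_mul_orderDz]
    exact Finset.sum_eq_zero fun m _ => by rw [← heqz y m, mul_zero]
  have hA : ∑ i, ∑ k, K y i * pd i (fun z => K z k) y * pd k (fun z => Real.log (p z)) y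
      = (∑ i, ∑ k, K y i * pd i (fun z => K z k) y * pd k p y) / p y := by
    simp only [pd_log (hp y) (hp0 y), Finset.sum_div]
    exact Finset.sum_congr rfl fun i _ => Finset.sum_congr rfl fun k _ => by ring
  rw [congrFun (sum_mul_pd_log hp hp0) y, hA]
  have hy := hp0 y
  linear_combination (norm := (field_simp; ring)) (-1 / p y ^ 2) * hcontr

lemma pow_three_mul_pd_potential (hp : ContDiff ℝ 3 p) (hK : ContDiff ℝ 2 K)
    (hh : ContDiff ℝ 2 h) (x : Fin d → ℝ) (hx : p x ≠ 0) (j : Fin d) :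
    p x ^ 3 * pd j (fun y =>
        - (1 / 2) * (h y) ^ 2
        + 1 / (2 * p y) * ∑ i, ∑ k, K y i * K y k * pd i (pd k p) y
        + ∑ i, K y i * pd i h y
        - (1 / 2) * ∑ i, ∑ k, pd i (fun z => K z k) y * pd k (fun z => K z i) y
        - (1 / 2) * ((∑ i, pd i p y * K y i) / p y) ^ 2) x
      = p x * ((p x / 2) * ∑ i, ∑ k, K x i * K x k * pd j (pd i (pd k p)) x
          + p x * ∑ i, ∑ k, K x i * pd i (pd k p) x * pd j (fun y => K y k) x
          - (1 / 2) * (∑ i, ∑ k, K x i * pd i (pd k p) x * K x k) * pd j p x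
          - p x ^ 2 * h x * pd j h x
          + p x ^ 2 * ∑ i, K x i * pd i (pd j h) x
          + p x ^ 2 * ∑ i, pd i h x * pd j (fun y => K y i) x
          - p x ^ 2 * ∑ i, ∑ k, pd i (fun y => K y k) x * pd j (pd k (fun y => K y i)) x)
        - (∑ i, pd i p x * K x i) * (p x * ∑ i, K x i * pd i (pd j p) x
          + p x * ∑ i, pd i p x * pd j (fun y => K y i) x
          - (∑ i, pd i p x * K x i) * pd j p x) := by
  have dp : Differentiable ℝ p := hp.differentiable (by norm_num)
  have dh : Differentiable ℝ h := hh.differentiable two_ne_zero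
  have dK : Differentiable ℝ K := hK.differentiable two_ne_zero
  have dp1 := differentiable_pd hp (by norm_num)
  have dh1 := differentiable_pd hh le_rfl
  have dK1 := fun k => differentiable_pd (contDiff_pi.1 hK k) le_rfl
  have dp2 := fun k => differentiable_pd (contDiff_pd (m := 2) hp le_rfl k) le_rfl
  have hx2 : 2 * p x ≠ 0 := mul_ne_zero two_ne_zero hx
  have hS : ∑ i, ∑ k, K x i * K x k * pd i (pd k p) x
      = ∑ i, ∑ k, K x i * pd i (pd k p) x * K x k :=
    Finset.sum_congr rfl fun i _ => Finset.sum_congr rfl fun k _ => mul_right_comm _ _ _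
  simp (disch := first | assumption | fun_prop (disch := assumption)) only [pd_sub, pd_add,
    pd_mul, pd_sq, pd_const, one_div, pd_inv, pd_sum_sum_mul_mul_pd_pd hp (hK.of_le (by norm_num)),
    pd_sum_mul_pd hh (hK.of_le (by norm_num)), pd_sum_sum_pd_mul_pd hK, hS]
  rw [← sq_mul_pd_sum_mul_div (hp.of_le (by norm_num)) (hK.of_le (by norm_num)) x hx j]
  generalize pd j (fun y => (∑ i, pd i p y * K y i) / p y) x = dψ
  field_simp
  ring

end FeedbackParticleFilter

/-- second half of Proposition 2 of the paper.
Given the `O(Δz)`-identity (i) and the `O(Δt)`-identity (ii) obtained from the Taylor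
expansion of the update step of the multivariate feedback particle filter, the control
input equation (39) of the paper holds:
`−∇ᵀ((1/p)∇ᵀ(pu)) = ∇ᵀ[ −h²/2 − (1/(2p))Kᵀ∇²pK + (1/2)(Kᵀ∇log p)²
  − Kᵀ(∇Kᵀ)∇log p − ∇ᵀ(∇ᵀK)K − (1/2)tr((∇Kᵀ)²) ]`. -/
theorem stmt4 {d : ℕ}
    (p : (Fin d → ℝ) → ℝ) (hp : ContDiff ℝ 3 p) (hppos : ∀ x, 0 < p x)
    (K : (Fin d → ℝ) → (Fin d → ℝ)) (hK : ContDiff ℝ 3 K)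
    (u : (Fin d → ℝ) → (Fin d → ℝ)) (hu : ContDiff ℝ 2 u)
    (h : (Fin d → ℝ) → ℝ) (hh : ContDiff ℝ 2 h)
    (heqz : ∀ (x : Fin d → ℝ) (j : Fin d),
      0 = p x * ∑ i, K x i * pd i (pd j p) x
        + p x * ∑ i, pd i p x * pd j (fun y => K y i) x
        + (p x) ^ 2 * pd j h x
        + (p x) ^ 2 * pd j (fun y => ∑ i, pd i (fun z => K z i) y) x
        - (∑ i, pd i p x * K x i) * pd j p x)
    (heqt : ∀ (x : Fin d → ℝ) (j : Fin d),
      0 = p x * ∑ i, u x i * pd i (pd j p) x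
        + (p x / 2) * ∑ i, ∑ k, K x i * K x k * pd j (pd i (pd k p)) x
        + p x * ∑ i, pd i p x * pd j (fun y => u y i) x
        + p x * ∑ i, ∑ k, K x i * pd i (pd k p) x * pd j (fun y => K y k) x
        - (p x) ^ 2 * h x * pd j h x
        + p x * (∑ i, pd i p x * K x i) * pd j h x
        + (p x) ^ 2 * ∑ i, K x i * pd i (pd j h) x
        + (p x) ^ 2 * ∑ i, pd i h x * pd j (fun y => K y i) x
        + p x * (∑ i, pd i p x * K x i) * pd j (fun y => ∑ i, pd i (fun z => K z i) y) x
        + (p x) ^ 2 * (pd j (fun y => ∑ i, pd i (fun z => u z i) y) x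
            - ∑ i, ∑ k, pd i (fun y => K y k) x * pd j (pd k (fun y => K y i)) x)
        - (∑ i, pd i p x * u x i) * pd j p x
        - (1 / 2) * (∑ i, ∑ k, K x i * pd i (pd k p) x * K x k) * pd j p x) :
    ∀ (x : Fin d → ℝ) (j : Fin d),
      - pd j (fun y => (1 / p y) * ∑ i, pd i (fun z => p z * u z i) y) x
        = pd j (fun y =>
            - (1 / 2) * (h y) ^ 2
            - (1 / (2 * p y)) * ∑ i, ∑ k, K y i * K y k * pd i (pd k p) y
            + (1 / 2) * (∑ i, K y i * pd i (fun z => Real.log (p z)) y) ^ 2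
            - ∑ i, ∑ k, K y i * pd i (fun z => K z k) y * pd k (fun z => Real.log (p z)) y
            - ∑ k, K y k * pd k (fun z => ∑ i, pd i (fun w => K w i) z) y
            - (1 / 2) * ∑ i, ∑ k, pd i (fun z => K z k) y * pd k (fun z => K z i) y) x := by
  intro x j
  have hp0 : ∀ y, p y ≠ 0 := fun y => (hppos y).ne'
  rw [potential_eq_of_orderDz (hp.differentiable (by norm_num)) hp0 heqz]
  have hL := sq_mul_pd_one_div_mul_sum_pd_mul (hp.of_le (by norm_num)) hu x (hp0 x) j
  have hR := pow_three_mul_pd_potential hp (hK.of_le (by norm_num)) hh x (hp0 x) j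
  refine mul_left_cancel₀ (pow_ne_zero 3 (hp0 x)) ?_
  linear_combination (-p x) * hL - hR + p x * heqt x j - (∑ i, pd i p x * K x i) * heqz x j
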